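/- arXiv:2404.16021 — 3 statements merged into one kernel-verified Lean document; each statement's English description precedes it below -/
import Mathlib

section
/- Let (μ_n)_{n≥1} be a sequence of real numbers such that μ_n = A·(log n)² + B·log n + O(1) for some constants A, B ∈ ℝ. Then, as n → ∞, (1/θ(n−1)) · Σ_{i=1}^{n−1} |1 − μ_n + μ_i|³/(n−i) = O((log n)²); equivalently, the L³-norm ( (1/θ(n−1)) · Σ_{i=1}^{n−1} |1 − μ_n + μ_i|³/(n−i) )^{1/3} is O((log n)^{2/3}). -/
/-!
Write `μ n = A (log n)² + B log n + e n` with `|e n| ≤ K`. Then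
`|1 - μ n + μ i| ≤ (1 + 2K) + (2|A| log n + |B|) log (n / i)`, and after cubing, the constant part
averages to `O(1)` because `∑ 1/(n-i) = θ(n-1)`, while the other part is `(log n)³` times
`∑ log (n/i)³ / (n-i)`, which is bounded uniformly in `n` since each term is at most
`432 / √(n i)`. Dividing by `θ(n-1) ≥ log n` leaves `O((log n)²)`.
-/

open MeasureTheory Filter Real Asymptotics

noncomputable section

/-- The harmonic sum `θ(n) = ∑_{i=1}^n 1/i`. -/
def harmSum (n : ℕ) : ℝ := ∑ i ∈ Finset.Icc 1 n, (1 : ℝ) / i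

lemma harmSum_eq_harmonic (n : ℕ) : harmSum n = harmonic n := by
  simp [harmSum, harmonic_eq_sum_Icc]

lemma log_le_harmSum_sub_one {n : ℕ} (hn : 1 ≤ n) : log n ≤ harmSum (n - 1) := by
  simpa [harmSum_eq_harmonic, Nat.sub_add_cancel hn] using log_add_one_le_harmonic (n - 1)

lemma sum_one_div_sub_eq_harmSum (n : ℕ) :
    ∑ i ∈ Finset.Icc 1 (n - 1), 1 / ((n : ℝ) - i) = harmSum (n - 1) := by
  refine Finset.sum_nbij' (fun i => n - i) (fun j => n - j) ?_ ?_ ?_ ?_ ?_ <;>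
    intro i hi <;> simp only [Finset.mem_Icc] at hi ⊢
  · omega
  · omega
  · omega
  · omega
  · rw [Nat.cast_sub (by omega)]

lemma sum_one_div_sqrt_le (m : ℕ) : ∑ i ∈ Finset.Icc 1 m, 1 / √i ≤ 2 * √m := by
  induction m with
  | zero => simp
  | succ m ih =>
    rw [Finset.sum_Icc_succ_top (by omega)]
    have hpos : 0 < √((m : ℝ) + 1) := by positivity
    have hsq := Real.sq_sqrt (by positivity : (0 : ℝ) ≤ m + 1)
    have hsq₀ := Real.sq_sqrt (Nat.cast_nonneg (α := ℝ) m)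
    have hstep : 1 / √((m : ℝ) + 1) ≤ 2 * √((m : ℝ) + 1) - 2 * √m := by
      rw [div_le_iff₀ hpos]; nlinarith [sq_nonneg (√((m : ℝ) + 1) - √m)]
    push_cast
    linarith

-- `432 = 2 · 6³`: for `y > 2`, `log y ≤ 6 y^(1/6)` and `y - 1 > y / 2`.
lemma log_pow_three_le {y : ℝ} (hy : 1 ≤ y) : log y ^ 3 ≤ 432 * (y - 1) / √y := by
  have hlog : 0 ≤ log y := log_nonneg hy
  have hs : 0 < √y := by positivity
  have hsq := Real.sq_sqrt (by linarith : (0 : ℝ) ≤ y)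
  rw [le_div_iff₀ hs]
  rcases le_or_gt y 2 with hy2 | hy2
  · have hle : log y ≤ y - 1 := log_le_sub_one_of_pos (by linarith)
    have : log y ^ 3 ≤ y - 1 := by
      calc log y ^ 3 ≤ (y - 1) ^ 3 := by gcongr
        _ ≤ y - 1 := pow_le_of_le_one (by linarith) (by linarith) (by norm_num)
    nlinarith
  · have hle : log y ≤ y ^ (1 / 6 : ℝ) / (1 / 6) := log_le_rpow_div (by linarith) (by norm_num)
    have h6 : (y ^ (1 / 6 : ℝ)) ^ 3 = √y := by
      rw [← Real.rpow_natCast, ← Real.rpow_mul (by linarith), Real.sqrt_eq_rpow]; norm_num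
    have : log y ^ 3 ≤ 216 * √y := by
      calc log y ^ 3 ≤ (y ^ (1 / 6 : ℝ) / (1 / 6)) ^ 3 := by gcongr
        _ = 216 * √y := by rw [div_pow, h6]; ring
    nlinarith

lemma log_div_pow_three_div_sub_le {x y : ℝ} (hx : 0 < x) (hxy : x < y) :
    log (y / x) ^ 3 / (y - x) ≤ 432 / (√y * √x) := by
  have hyx : 1 ≤ y / x := by rw [le_div_iff₀ hx]; linarith
  have hsx := Real.sq_sqrt hx.le
  have hsy0 : 0 < √y := Real.sqrt_pos.2 (hx.trans hxy)
  calc log (y / x) ^ 3 / (y - x) ≤ 432 * (y / x - 1) / √(y / x) / (y - x) :=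
        div_le_div_of_nonneg_right (log_pow_three_le hyx) (by linarith)
    _ = 432 / (√y * √x) := by
        rw [Real.sqrt_div' _ hx.le]
        field_simp
        rw [hsx, mul_div_cancel_left₀ _ (sub_ne_zero.2 hxy.ne')]

lemma sum_log_div_pow_three_div_sub_le (n : ℕ) :
    ∑ i ∈ Finset.Icc 1 (n - 1), log ((n : ℝ) / i) ^ 3 / ((n : ℝ) - i) ≤ 864 := by
  calc ∑ i ∈ Finset.Icc 1 (n - 1), log ((n : ℝ) / i) ^ 3 / ((n : ℝ) - i)
      ≤ ∑ i ∈ Finset.Icc 1 (n - 1), 432 / √n * (1 / √i) := by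
        refine Finset.sum_le_sum fun i hi => ?_
        rw [Finset.mem_Icc] at hi
        have hi₁ : (0 : ℝ) < i := by exact_mod_cast hi.1
        have hin : (i : ℝ) < n := by exact_mod_cast (by omega : i < n)
        rw [div_mul_div_comm, mul_one]
        exact log_div_pow_three_div_sub_le hi₁ hin
    _ = 432 / √n * ∑ i ∈ Finset.Icc 1 (n - 1), 1 / √i := (Finset.mul_sum ..).symm
    _ ≤ 432 / √n * (2 * √n) := by
        gcongr
        refine (sum_one_div_sqrt_le _).trans ?_
        gcongr
        exact_mod_cast Nat.sub_le n 1
    _ = 864 * (√n / √n) := by ring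
    _ ≤ 864 := mul_le_of_le_one_right (by norm_num) (div_self_le_one _)

lemma abs_one_sub_add_le {μ : ℕ → ℝ} {A B K : ℝ}
    (hK : ∀ n, |μ n - (A * log n ^ 2 + B * log n)| ≤ K) {i n : ℕ} (hi : 1 ≤ i) (hin : i ≤ n) :
    |1 - μ n + μ i| ≤ (1 + 2 * K) + (2 * |A| * log n + |B|) * log ((n : ℝ) / i) := by
  have hi₀ : (0 : ℝ) < i := by exact_mod_cast hi
  have hin' : (i : ℝ) ≤ n := by exact_mod_cast hin
  have hlog : log i ≤ log n := log_le_log hi₀ hin'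
  rw [log_div (hi₀.trans_le hin').ne' hi₀.ne']
  have hAn := abs_le.1 (hK n)
  have hAi := abs_le.1 (hK i)
  have hL : 0 ≤ log n - log i := by linarith
  have hS : 0 ≤ (log n + log i) * (log n - log i) := by positivity
  rw [abs_le]
  constructor <;>
    nlinarith [mul_nonneg (by linarith [le_abs_self A] : 0 ≤ |A| - A) hS,
      mul_nonneg (by linarith [neg_abs_le A] : 0 ≤ |A| + A) hS,
      mul_nonneg (abs_nonneg A) (mul_nonneg hL hL),
      mul_nonneg (by linarith [le_abs_self B] : 0 ≤ |B| - B) hL,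
      mul_nonneg (by linarith [neg_abs_le B] : 0 ≤ |B| + B) hL]

/-- `E |1 - μ n + μ (I n)|³` for the random index `I n`. -/
def tollThirdMoment (μ : ℕ → ℝ) (n : ℕ) : ℝ :=
  (1 / harmSum (n - 1)) * ∑ i ∈ Finset.Icc 1 (n - 1), |1 - μ n + μ i| ^ 3 / ((n : ℝ) - (i : ℝ))

lemma tollThirdMoment_nonneg (μ : ℕ → ℝ) (n : ℕ) : 0 ≤ tollThirdMoment μ n := by
  refine mul_nonneg (one_div_nonneg.2 (Finset.sum_nonneg fun i _ => by positivity))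
    (Finset.sum_nonneg fun i hi => div_nonneg (by positivity) ?_)
  rw [Finset.mem_Icc] at hi
  exact sub_nonneg.2 (by exact_mod_cast (by omega : i ≤ n))

lemma sum_abs_one_sub_add_pow_three_div_le {μ : ℕ → ℝ} {A B K : ℝ}
    (hK : ∀ n, |μ n - (A * log n ^ 2 + B * log n)| ≤ K) (n : ℕ) :
    ∑ i ∈ Finset.Icc 1 (n - 1), |1 - μ n + μ i| ^ 3 / ((n : ℝ) - i)
      ≤ 4 * (1 + 2 * K) ^ 3 * harmSum (n - 1) + 3456 * (2 * |A| * log n + |B|) ^ 3 := by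
  set a := 1 + 2 * K
  set c := 2 * |A| * log n + |B|
  have ha : 0 ≤ a := by linarith [(abs_nonneg _).trans (hK 0)]
  have hc : 0 ≤ c := by have := log_natCast_nonneg n; positivity
  calc ∑ i ∈ Finset.Icc 1 (n - 1), |1 - μ n + μ i| ^ 3 / ((n : ℝ) - i)
      ≤ ∑ i ∈ Finset.Icc 1 (n - 1),
          (4 * a ^ 3 * (1 / ((n : ℝ) - i))
            + 4 * c ^ 3 * (log ((n : ℝ) / i) ^ 3 / ((n : ℝ) - i))) := by
        refine Finset.sum_le_sum fun i hi => ?_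
        rw [Finset.mem_Icc] at hi
        have hin : (0 : ℝ) < n - i := sub_pos.2 (by exact_mod_cast (by omega : i < n))
        have hL : 0 ≤ log ((n : ℝ) / i) := log_nonneg (by
          rw [le_div_iff₀ (by exact_mod_cast hi.1)]; linarith)
        rw [← mul_div_assoc, ← mul_div_assoc, ← add_div, mul_one]
        gcongr
        calc |1 - μ n + μ i| ^ 3 ≤ (a + c * log ((n : ℝ) / i)) ^ 3 := by
              gcongr; exact abs_one_sub_add_le hK hi.1 (by omega)
          _ ≤ 4 * (a ^ 3 + (c * log ((n : ℝ) / i)) ^ 3) :=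
              (add_pow_le ha (mul_nonneg hc hL) 3).trans_eq (by norm_num)
          _ = 4 * a ^ 3 + 4 * c ^ 3 * log ((n : ℝ) / i) ^ 3 := by ring
    _ = 4 * a ^ 3 * harmSum (n - 1)
          + 4 * c ^ 3 * ∑ i ∈ Finset.Icc 1 (n - 1), log ((n : ℝ) / i) ^ 3 / ((n : ℝ) - i) := by
        rw [Finset.sum_add_distrib, ← Finset.mul_sum, ← Finset.mul_sum, sum_one_div_sub_eq_harmSum]
    _ ≤ 4 * a ^ 3 * harmSum (n - 1) + 3456 * c ^ 3 := by
        have := mul_le_mul_of_nonneg_left (sum_log_div_pow_three_div_sub_le n)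
          (by positivity : 0 ≤ 4 * c ^ 3)
        linarith

lemma tollThirdMoment_le {μ : ℕ → ℝ} {A B K : ℝ}
    (hK : ∀ n, |μ n - (A * log n ^ 2 + B * log n)| ≤ K) {n : ℕ} (hn : 3 ≤ n) :
    tollThirdMoment μ n ≤ (4 * (1 + 2 * K) ^ 3 + 3456 * (2 * |A| + |B|) ^ 3) * log n ^ 2 := by
  have hlog : 1 ≤ log n := by
    rw [le_log_iff_exp_le (by positivity)]
    have : (3 : ℝ) ≤ n := by exact_mod_cast hn
    linarith [exp_one_lt_d9]
  have hθ : log n ≤ harmSum (n - 1) := log_le_harmSum_sub_one (by omega)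
  have hθ₀ : 0 < harmSum (n - 1) := by linarith
  have ha : 0 ≤ 1 + 2 * K := by linarith [(abs_nonneg _).trans (hK 0)]
  have hc : 2 * |A| * log n + |B| ≤ (2 * |A| + |B|) * log n := by
    nlinarith [abs_nonneg B]
  have hcθ : (2 * |A| * log n + |B|) ^ 3 / harmSum (n - 1) ≤ (2 * |A| + |B|) ^ 3 * log n ^ 2 := by
    rw [div_le_iff₀ hθ₀]
    calc (2 * |A| * log n + |B|) ^ 3 ≤ ((2 * |A| + |B|) * log n) ^ 3 := by gcongr
      _ = (2 * |A| + |B|) ^ 3 * log n ^ 2 * log n := by ring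
      _ ≤ (2 * |A| + |B|) ^ 3 * log n ^ 2 * harmSum (n - 1) := by gcongr
  have ha' : (1 + 2 * K) ^ 3 ≤ (1 + 2 * K) ^ 3 * log n ^ 2 :=
    le_mul_of_one_le_right (by positivity) (one_le_pow₀ hlog)
  calc tollThirdMoment μ n
      ≤ (1 / harmSum (n - 1)) * (4 * (1 + 2 * K) ^ 3 * harmSum (n - 1)
          + 3456 * (2 * |A| * log n + |B|) ^ 3) := by
        unfold tollThirdMoment
        gcongr
        exact sum_abs_one_sub_add_pow_three_div_le hK n
    _ = 4 * (1 + 2 * K) ^ 3 + 3456 * (2 * |A| * log n + |B|) ^ 3 / harmSum (n - 1) := by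
        field_simp
    _ ≤ 4 * (1 + 2 * K) ^ 3 * log n ^ 2 + 3456 * ((2 * |A| + |B|) ^ 3 * log n ^ 2) := by
        rw [mul_div_assoc]
        linarith
    _ = _ := by ring

/-- if `μ_n = A (log n)² + B log n + O(1)` then
`(1/θ(n−1)) ∑_{i=1}^{n−1} |1 − μ_n + μ_i|³/(n−i) = O((log n)²)`; equivalently its cube
root is `O((log n)^{2/3})`. -/
theorem third_moment_toll_bound
    (μ : ℕ → ℝ) (A B : ℝ)
    (hμ : (fun n : ℕ => μ n - (A * Real.log n ^ 2 + B * Real.log n)) =O[atTop]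
      (fun _ : ℕ => (1 : ℝ))) :
    (fun n : ℕ => (1 / harmSum (n - 1)) *
        ∑ i ∈ Finset.Icc 1 (n - 1), |1 - μ n + μ i| ^ 3 / ((n : ℝ) - (i : ℝ)))
      =O[atTop] (fun n : ℕ => Real.log n ^ 2) ∧
    (fun n : ℕ => ((1 / harmSum (n - 1)) *
        ∑ i ∈ Finset.Icc 1 (n - 1), |1 - μ n + μ i| ^ 3 / ((n : ℝ) - (i : ℝ))) ^ ((1 : ℝ) / 3))
      =O[atTop] (fun n : ℕ => Real.log n ^ ((2 : ℝ) / 3)) := by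
  obtain ⟨K, hK⟩ := isBigO_one_nat_atTop_iff.1 hμ
  simp only [Real.norm_eq_abs] at hK
  have hbound : (tollThirdMoment μ ·) =O[atTop] (fun n : ℕ => log n ^ 2) := by
    refine IsBigO.of_bound (4 * (1 + 2 * K) ^ 3 + 3456 * (2 * |A| + |B|) ^ 3)
      (eventually_atTop.2 ⟨3, fun n hn => ?_⟩)
    rw [norm_of_nonneg (tollThirdMoment_nonneg μ n), norm_of_nonneg (sq_nonneg _)]
    exact tollThirdMoment_le hK hn
  refine ⟨hbound, (hbound.rpow (by norm_num) (.of_forall fun n => sq_nonneg _)).congr' .rfl ?_⟩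
  filter_upwards with n
  rw [← rpow_natCast, ← rpow_mul (log_natCast_nonneg n)]
  norm_num
end
end

section
/- Let (ξ(k))_{k≥1} be a real sequence with ξ(k) = O(log k / k). Then, as n → ∞, Σ_{k=1}^{n−1} |ξ(k)·log(k/n)|/(n−k) = O((log n)³/n). (This uses the bound Σ_{k=1}^{n−1} log(n/k)/(k(n−k)) = O((log n)²/n).) -/
/-!
Partial fractions give `1 / (k (n - k)) = (1 / k + 1 / (n - k)) / n`, so by symmetry
`∑ 1 / (k (n - k)) = 2 H_{n-1} / n ≤ 2 (1 + log n) / n`. The hypothesis bounds `|ξ k|` by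
`C (1 + log n) / k` for all `1 ≤ k < n`, and `|log (k / n)| ≤ log n`, so the sum is at most
`C (1 + log n) log n` times `∑ 1 / (k (n - k))`, that is `O((log n)³ / n)`.
-/

open Filter Real Asymptotics

theorem sum_Icc_inv_sub_eq_sum_Icc_inv (n : ℕ) :
    ∑ k ∈ Finset.Icc 1 (n - 1), ((n : ℝ) - k)⁻¹ = ∑ k ∈ Finset.Icc 1 (n - 1), (k : ℝ)⁻¹ := by
  refine Finset.sum_nbij' (n - ·) (n - ·) ?_ ?_ ?_ ?_ ?_ <;> intro k hk <;>
    simp only [Finset.mem_Icc] at hk ⊢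
  · omega
  · omega
  · omega
  · omega
  · rw [Nat.cast_sub (by omega)]

theorem sum_Icc_inv_mul_sub_eq (n : ℕ) :
    ∑ k ∈ Finset.Icc 1 (n - 1), ((k : ℝ) * (n - k))⁻¹
      = 2 / n * ∑ k ∈ Finset.Icc 1 (n - 1), (k : ℝ)⁻¹ := by
  have partial_fractions : ∀ k ∈ Finset.Icc 1 (n - 1),
      ((k : ℝ) * (n - k))⁻¹ = (n : ℝ)⁻¹ * ((k : ℝ)⁻¹ + ((n : ℝ) - k)⁻¹) := by
    intro k hk
    rw [Finset.mem_Icc] at hk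
    have hk0 : (k : ℝ) ≠ 0 := by norm_cast; omega
    have hnk : (n : ℝ) - k ≠ 0 := sub_ne_zero.2 (by norm_cast; omega)
    have hn : (n : ℝ) ≠ 0 := by norm_cast; omega
    field_simp
    ring
  rw [Finset.sum_congr rfl partial_fractions, ← Finset.mul_sum, Finset.sum_add_distrib,
    sum_Icc_inv_sub_eq_sum_Icc_inv]
  ring

theorem sum_Icc_inv_mul_sub_le (n : ℕ) :
    ∑ k ∈ Finset.Icc 1 (n - 1), ((k : ℝ) * (n - k))⁻¹ ≤ 2 * (1 + log n) / n := by
  have harmonic_le : ∑ k ∈ Finset.Icc 1 (n - 1), (k : ℝ)⁻¹ ≤ 1 + log n := by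
    have h := harmonic_le_one_add_log (n - 1)
    simp only [harmonic_eq_sum_Icc, Rat.cast_sum, Rat.cast_inv, Rat.cast_natCast] at h
    have hlog : log (n - 1 : ℕ) ≤ log n := by
      rcases Nat.eq_zero_or_pos (n - 1) with h0 | hpos
      · rw [h0, Nat.cast_zero, log_zero]
        exact log_natCast_nonneg n
      · exact log_le_log (by exact_mod_cast hpos) (by exact_mod_cast Nat.sub_le n 1)
    linarith
  rw [sum_Icc_inv_mul_sub_eq, mul_div_right_comm]
  exact mul_le_mul_of_nonneg_left harmonic_le (by positivity)

theorem abs_log_div_le_log {x y : ℝ} (hx : 1 ≤ x) (hxy : x ≤ y) : |log (x / y)| ≤ log y := by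
  rw [log_div (by positivity) (by linarith),
    abs_of_nonpos (by linarith [log_le_log (by linarith) hxy])]
  linarith [log_nonneg hx]

-- `1 + log k` rather than `log k`, which vanishes at `k = 1` where `ξ 1` is arbitrary.
theorem exists_abs_le_mul_one_add_log_div {ξ : ℕ → ℝ}
    (hξ : ξ =O[atTop] fun k : ℕ => log k / k) :
    ∃ C, 0 ≤ C ∧ ∀ k, 1 ≤ k → |ξ k| ≤ C * ((1 + log k) / k) := by
  obtain ⟨c, hc⟩ := hξ.bound
  obtain ⟨N, hN⟩ := eventually_atTop.1 hc
  set M := ∑ j ∈ Finset.range N, |ξ j| * j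
  have hM : 0 ≤ M := Finset.sum_nonneg fun j _ => by positivity
  refine ⟨max c 0 + M, by positivity, fun k hk => ?_⟩
  have hk : (1 : ℝ) ≤ k := by exact_mod_cast hk
  have hlog : 0 ≤ log k := log_nonneg hk
  have hmono : (1 : ℝ) / k ≤ (1 + log k) / k := by gcongr; linarith
  rcases lt_or_ge k N with hkN | hkN
  · have hsingle : |ξ k| * k ≤ M :=
      Finset.single_le_sum (f := fun j => |ξ j| * j) (fun j _ => by positivity)
        (Finset.mem_range.2 hkN)
    calc |ξ k| = |ξ k| * k * (1 / k) := by field_simp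
      _ ≤ (max c 0 + M) * ((1 + log k) / k) :=
        mul_le_mul (by linarith [le_max_right c 0]) hmono (by positivity) (by positivity)
  · have h := hN k hkN
    rw [Real.norm_eq_abs, Real.norm_eq_abs, abs_of_nonneg (a := log k / k) (by positivity)] at h
    calc |ξ k| ≤ max c 0 * (log k / k) := h.trans (by gcongr; exact le_max_left c 0)
      _ ≤ (max c 0 + M) * ((1 + log k) / k) := by gcongr <;> linarith

theorem sum_abs_mul_log_div_sub_le {ξ : ℕ → ℝ} {C : ℝ} (hC0 : 0 ≤ C)
    (hC : ∀ k, 1 ≤ k → |ξ k| ≤ C * ((1 + log k) / k)) (n : ℕ) :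
    ∑ k ∈ Finset.Icc 1 (n - 1), |ξ k * log ((k : ℝ) / n)| / ((n : ℝ) - k)
      ≤ 2 * C * ((1 + log n) ^ 2 * log n / n) := by
  have hlogn : 0 ≤ log n := log_natCast_nonneg n
  have term_le : ∀ k ∈ Finset.Icc 1 (n - 1), |ξ k * log ((k : ℝ) / n)| / ((n : ℝ) - k)
      ≤ C * (1 + log n) * log n * ((k : ℝ) * (n - k))⁻¹ := by
    intro k hk
    rw [Finset.mem_Icc] at hk
    have hk1 : (1 : ℝ) ≤ k := by exact_mod_cast hk.1
    have hkn : (k : ℝ) < n := by exact_mod_cast (by omega : k < n)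
    have hlogk : log k ≤ log n := log_le_log (by positivity) hkn.le
    have hξk : |ξ k| ≤ C * (1 + log n) / k := by
      rw [mul_div_assoc]
      exact (hC k hk.1).trans (by gcongr)
    calc |ξ k * log ((k : ℝ) / n)| / ((n : ℝ) - k)
        = |ξ k| * |log ((k : ℝ) / n)| / ((n : ℝ) - k) := by rw [abs_mul]
      _ ≤ C * (1 + log n) / k * log n / ((n : ℝ) - k) := by
        gcongr
        exact abs_log_div_le_log hk1 hkn.le
      _ = C * (1 + log n) * log n * ((k : ℝ) * (n - k))⁻¹ := by rw [mul_inv]; ring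
  calc _ ≤ ∑ k ∈ Finset.Icc 1 (n - 1), C * (1 + log n) * log n * ((k : ℝ) * (n - k))⁻¹ :=
        Finset.sum_le_sum term_le
    _ = C * (1 + log n) * log n * ∑ k ∈ Finset.Icc 1 (n - 1), ((k : ℝ) * (n - k))⁻¹ :=
        (Finset.mul_sum _ _ _).symm
    _ ≤ C * (1 + log n) * log n * (2 * (1 + log n) / n) := by
        gcongr
        exact sum_Icc_inv_mul_sub_le n
    _ = 2 * C * ((1 + log n) ^ 2 * log n / n) := by ring

theorem isBigO_one_add_log_sq_mul_log_div :
    (fun x : ℝ => (1 + log x) ^ 2 * log x / x) =O[atTop] fun x => log x ^ 3 / x := by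
  have h : (fun x : ℝ => 1 + log x) =O[atTop] log :=
    isLittleO_const_log_atTop.isBigO.add (isBigO_refl _ _)
  exact (((h.pow 2).mul (isBigO_refl log atTop)).mul (isBigO_refl (·⁻¹) atTop)).congr
    (fun x => by ring) (fun x => by ring)

/-- if `ξ(k) = O(log k / k)` then
`∑_{k=1}^{n−1} |ξ(k) log(k/n)|/(n−k) = O((log n)³/n)`. -/
theorem xi_log_sum_bound
    (ξ : ℕ → ℝ)
    (hξ : ξ =O[atTop] (fun k : ℕ => Real.log k / k)) :
    (fun n : ℕ => ∑ k ∈ Finset.Icc 1 (n - 1),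
        |ξ k * Real.log ((k : ℝ) / (n : ℝ))| / ((n : ℝ) - (k : ℝ)))
      =O[atTop] (fun n : ℕ => Real.log n ^ 3 / n) := by
  obtain ⟨C, hC0, hC⟩ := exists_abs_le_mul_one_add_log_div hξ
  calc _ =O[atTop] fun n : ℕ => 2 * C * ((1 + log n) ^ 2 * log n / n) := by
        refine IsBigO.of_bound' (Eventually.of_forall fun n => ?_)
        have hsum_nonneg : 0 ≤ ∑ k ∈ Finset.Icc 1 (n - 1),
            |ξ k * log ((k : ℝ) / n)| / ((n : ℝ) - k) :=
          Finset.sum_nonneg fun k hk => div_nonneg (abs_nonneg _)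
            (sub_nonneg.2 (by rw [Finset.mem_Icc] at hk; exact_mod_cast (by omega : k ≤ n)))
        rw [Real.norm_of_nonneg hsum_nonneg]
        exact (sum_abs_mul_log_div_sub_le hC0 hC n).trans (le_abs_self _)
    _ =O[atTop] fun n : ℕ => log n ^ 3 / n :=
        (isBigO_one_add_log_sq_mul_log_div.comp_tendsto
          tendsto_natCast_atTop_atTop).const_mul_left _
end

section
/- Let A* > 0 be a constant and let (σ_n²)_{n≥1} be a nonnegative real sequence with σ_n² = A*·(log n)³ + O((log n)²). For n ≥ 2 define G_n = σ_{I_n} / (√(A*)·(log n)^{3/2}), where I_n has P(I_n = i) = 1/((n−i)·θ(n−1)) for 1 ≤ i ≤ n−1. Then |G_n − 1| = O( (|log(I_n/n)| + 1)/log n ) pointwise, and E[|G_n − 1|³] = (1/θ(n−1)) · Σ_{i=1}^{n−1} |σ_i/(√(A*)·(log n)^{3/2}) − 1|³/(n−i) = O((log n)^{−3}). -/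
open MeasureTheory Filter Real Asymptotics

noncomputable section

lemma harmSum_pos {m : ℕ} (hm : 1 ≤ m) : 0 < harmSum m :=
  Finset.sum_pos (fun i hi => by have := (Finset.mem_Icc.1 hi).1; positivity)
    ⟨1, Finset.mem_Icc.2 ⟨le_rfl, hm⟩⟩

lemma sum_Icc_one_div_sub_eq_harmSum (n : ℕ) :
    ∑ i ∈ Finset.Icc 1 (n - 1), (1 : ℝ) / ((n : ℝ) - i) = harmSum (n - 1) := by
  refine Finset.sum_nbij' (fun i => n - i) (fun j => n - j) ?_ ?_ ?_ ?_ ?_ <;>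
    intro i hi <;> simp only [Finset.mem_Icc] at hi ⊢
  · omega
  · omega
  · omega
  · omega
  · rw [Nat.cast_sub (by omega)]

lemma Asymptotics.IsBigO.exists_abs_le_mul_abs_add_one {f g : ℕ → ℝ} (h : f =O[atTop] g) :
    ∃ K, ∀ n, |f n| ≤ K * (|g n| + 1) := by
  have hg : g =O[atTop] (fun n => |g n| + 1) :=
    IsBigO.of_bound 1 (Eventually.of_forall fun n => by
      rw [norm_eq_abs, norm_of_nonneg (by positivity)]; linarith [le_abs_self (|g n|)])
  have hpos : ∀ n, |g n| + 1 ≠ 0 := fun n => by positivity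
  obtain ⟨K, hK⟩ := (isBigO_nat_atTop_iff fun n hn => absurd hn (hpos n)).1 (h.trans hg)
  exact ⟨K, fun n => by simpa [abs_of_nonneg (by positivity : 0 ≤ |g n| + 1)] using hK n⟩

lemma abs_sqrt_sub_one_le {x : ℝ} (hx : 0 ≤ x) : |√x - 1| ≤ |x - 1| := by
  have hfactor : x - 1 = (√x - 1) * (√x + 1) := by
    nth_rw 1 [← sq_sqrt hx]; ring
  rw [hfactor, abs_mul, abs_of_pos (by positivity : 0 < √x + 1)]
  exact le_mul_of_one_le_right (abs_nonneg _) (by linarith [sqrt_nonneg x])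

lemma abs_log_add_one_pow_three_le {y : ℝ} (hy0 : 0 < y) (hy1 : y ≤ 1) :
    (|log y| + 1) ^ 3 ≤ 6 * exp 1 / y := by
  have hlog : |log y| = -log y := abs_of_nonpos (log_nonpos hy0.le hy1)
  rw [hlog]
  have h := pow_div_factorial_le_exp _ (by linarith [abs_nonneg (log y)] : 0 ≤ -log y + 1) 3
  rw [exp_add, exp_neg, exp_log hy0] at h
  norm_num [Nat.factorial] at h
  calc (-log y + 1) ^ 3 ≤ 6 * (y⁻¹ * exp 1) := by linarith
    _ = 6 * exp 1 / y := by ring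

lemma abs_sqrt_div_sub_one_le {A s K ℓ L L₀ : ℝ} (hA : 0 < A) (hs : 0 ≤ s) (hL₀ : 0 < L₀)
    (hL₀L : L₀ ≤ L) (hℓ : 0 ≤ ℓ) (hℓL : ℓ ≤ L) (hsℓ : |s - A * ℓ ^ 3| ≤ K * (ℓ ^ 2 + 1)) :
    |√s / (√A * L ^ ((3 : ℝ) / 2)) - 1| ≤ (K * (1 + L₀⁻¹ ^ 2) / A + 3) * ((L - ℓ + 1) / L) := by
  have hL : 0 < L := hL₀.trans_le hL₀L
  have hK : 0 ≤ K := nonneg_of_mul_nonneg_left ((abs_nonneg _).trans hsℓ) (by positivity)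
  have hD : 0 < A * L ^ 3 := by positivity
  have hden : √A * L ^ ((3 : ℝ) / 2) = √(A * L ^ 3) := by
    rw [sqrt_mul hA.le, sqrt_eq_rpow (L ^ 3), ← rpow_natCast, ← rpow_mul hL.le]
    norm_num
  have hL₀L_sq : 1 ≤ L₀⁻¹ ^ 2 * L ^ 2 := by
    rw [← mul_pow, inv_mul_eq_div]
    exact one_le_pow₀ ((one_le_div hL₀).2 hL₀L)
  have hnum : |s - A * L ^ 3| ≤ (K * (1 + L₀⁻¹ ^ 2) + 3 * A) * ((L - ℓ + 1) * L ^ 2) := by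
    have hcube : L ^ 3 - ℓ ^ 3 ≤ 3 * L ^ 2 * (L - ℓ) := by
      nlinarith [mul_nonneg (mul_nonneg (sub_nonneg.2 hℓL) (sub_nonneg.2 hℓL))
        (by linarith : 0 ≤ 2 * L + ℓ)]
    have hsq : ℓ ^ 2 + 1 ≤ (1 + L₀⁻¹ ^ 2) * L ^ 2 := by nlinarith
    calc |s - A * L ^ 3| ≤ |s - A * ℓ ^ 3| + |A * ℓ ^ 3 - A * L ^ 3| := abs_sub_le _ _ _
      _ = |s - A * ℓ ^ 3| + A * (L ^ 3 - ℓ ^ 3) := by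
        rw [abs_sub_comm (A * ℓ ^ 3), ← mul_sub, abs_mul, abs_of_pos hA,
          abs_of_nonneg (sub_nonneg.2 (pow_le_pow_left₀ hℓ hℓL 3))]
      _ ≤ K * ((1 + L₀⁻¹ ^ 2) * L ^ 2) + A * (3 * L ^ 2 * (L - ℓ)) := by
        gcongr; exact hsℓ.trans (by gcongr)
      _ ≤ _ := by
        have hK' : 0 ≤ K * (1 + L₀⁻¹ ^ 2) := by positivity
        have hgap : 0 ≤ (L - ℓ) * L ^ 2 := mul_nonneg (sub_nonneg.2 hℓL) (sq_nonneg L)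
        nlinarith [mul_nonneg hK' hgap, mul_nonneg hA.le (sq_nonneg L)]
  calc |√s / (√A * L ^ ((3 : ℝ) / 2)) - 1| = |√(s / (A * L ^ 3)) - 1| := by
        rw [hden, sqrt_div' _ hD.le]
    _ ≤ |s / (A * L ^ 3) - 1| := abs_sqrt_sub_one_le (by positivity)
    _ = |s - A * L ^ 3| / (A * L ^ 3) := by rw [div_sub_one hD.ne', abs_div, abs_of_pos hD]
    _ ≤ _ := by
      rw [div_le_iff₀ hD]
      refine hnum.trans_eq ?_
      field_simp

lemma exists_pointwise_bound (A : ℝ) (hA : 0 < A) (σsq : ℕ → ℝ) (hσnonneg : ∀ n, 0 ≤ σsq n)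
    (hσ : (fun n : ℕ => σsq n - A * log n ^ 3) =O[atTop] (fun n : ℕ => log n ^ 2)) :
    ∃ C : ℝ, 0 ≤ C ∧ ∀ n : ℕ, 2 ≤ n → ∀ i : ℕ, 1 ≤ i → i ≤ n - 1 →
      |√(σsq i) / (√A * log n ^ ((3 : ℝ) / 2)) - 1|
        ≤ C * ((|log ((i : ℝ) / (n : ℝ))| + 1) / log n) := by
  obtain ⟨K, hK⟩ := hσ.exists_abs_le_mul_abs_add_one
  have hK0 : 0 ≤ K := nonneg_of_mul_nonneg_left ((abs_nonneg _).trans (hK 0)) (by positivity)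
  refine ⟨K * (1 + (log 2)⁻¹ ^ 2) / A + 3, by positivity, fun n hn i hi hin => ?_⟩
  have hi' : (1 : ℝ) ≤ i := by exact_mod_cast hi
  have hin' : (i : ℝ) ≤ n := by exact_mod_cast hin.trans (Nat.sub_le n 1)
  have hlog_div : |log ((i : ℝ) / n)| = log n - log i := by
    have := log_le_log (by positivity) hin'
    rw [log_div (by positivity) (by linarith), abs_of_nonpos (by linarith)]
    ring
  rw [hlog_div]
  refine abs_sqrt_div_sub_one_le hA (hσnonneg i) (log_pos one_lt_two)
    (log_le_log two_pos (by exact_mod_cast hn)) (log_nonneg hi') (log_le_log (by positivity) hin') ?_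
  simpa [abs_of_nonneg (sq_nonneg (log (i : ℝ)))] using hK i

lemma abs_harmonic_average_pow_three_le {n : ℕ} (hn : 2 ≤ n) {g : ℕ → ℝ} {C : ℝ} (hC : 0 ≤ C)
    (hg : ∀ i : ℕ, 1 ≤ i → i ≤ n - 1 → |g i| ≤ C * ((|log ((i : ℝ) / (n : ℝ))| + 1) / log n)) :
    |(1 / harmSum (n - 1)) * ∑ i ∈ Finset.Icc 1 (n - 1), |g i| ^ 3 / ((n : ℝ) - i)|
      ≤ 12 * exp 1 * C ^ 3 / log n ^ 3 := by
  have hL : 0 < log n := log_pos (by exact_mod_cast hn)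
  have hθ : 0 < harmSum (n - 1) := harmSum_pos (by omega)
  have hterm : ∀ i ∈ Finset.Icc 1 (n - 1), 0 ≤ |g i| ^ 3 / ((n : ℝ) - i) ∧
      |g i| ^ 3 / ((n : ℝ) - i) ≤ 6 * exp 1 * C ^ 3 / log n ^ 3 * (1 / i + 1 / ((n : ℝ) - i)) := by
    intro i hi
    obtain ⟨hi1, hin⟩ := Finset.mem_Icc.1 hi
    have hi0 : (0 : ℝ) < i := by exact_mod_cast hi1
    have hni : (0 : ℝ) < n - i := sub_pos.2 (by exact_mod_cast (by omega : i < n))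
    refine ⟨by positivity, ?_⟩
    have hlog := abs_log_add_one_pow_three_le (div_pos hi0 (hi0.trans (sub_pos.1 hni)))
      (div_le_one_of_le₀ (sub_pos.1 hni).le (by positivity))
    calc |g i| ^ 3 / ((n : ℝ) - i)
        ≤ (C * ((|log ((i : ℝ) / n)| + 1) / log n)) ^ 3 / ((n : ℝ) - i) := by
          gcongr; exact hg i hi1 hin
      _ = C ^ 3 * (|log ((i : ℝ) / n)| + 1) ^ 3 / log n ^ 3 / ((n : ℝ) - i) := by ring
      _ ≤ C ^ 3 * (6 * exp 1 / (i / n)) / log n ^ 3 / ((n : ℝ) - i) := by gcongr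
      _ = _ := by field_simp; ring
  have hsum : ∑ i ∈ Finset.Icc 1 (n - 1), |g i| ^ 3 / ((n : ℝ) - i)
      ≤ 12 * exp 1 * C ^ 3 / log n ^ 3 * harmSum (n - 1) := by
    calc _ ≤ ∑ i ∈ Finset.Icc 1 (n - 1),
          6 * exp 1 * C ^ 3 / log n ^ 3 * (1 / i + 1 / ((n : ℝ) - i)) :=
          Finset.sum_le_sum fun i hi => (hterm i hi).2
      _ = 6 * exp 1 * C ^ 3 / log n ^ 3 * (harmSum (n - 1) + harmSum (n - 1)) := by
          rw [← Finset.mul_sum, Finset.sum_add_distrib, sum_Icc_one_div_sub_eq_harmSum, harmSum]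
      _ = _ := by ring
  rw [abs_of_nonneg (mul_nonneg (by positivity)
    (Finset.sum_nonneg fun i hi => (hterm i hi).1)), one_div_mul_eq_div, div_le_iff₀ hθ]
  exact hsum

/-- with `σ_n² = A* (log n)³ + O((log n)²)` (`A* > 0`) and
`G_n = σ_{I_n}/(√A* (log n)^{3/2})`, one has the pointwise bound
`|G_n − 1| = O((|log(I_n/n)| + 1)/log n)` (uniformly over the possible values
`1 ≤ i ≤ n − 1` of `I_n`), and `E[|G_n − 1|³] = O((log n)^{−3})`. -/
theorem G_minus_one_bounds
    (Astar : ℝ) (hA : 0 < Astar)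
    (σsq : ℕ → ℝ) (hσnonneg : ∀ n, 0 ≤ σsq n)
    (hσ : (fun n : ℕ => σsq n - Astar * Real.log n ^ 3)
      =O[atTop] (fun n : ℕ => Real.log n ^ 2)) :
    (∃ Cc : ℝ, ∀ n : ℕ, 2 ≤ n → ∀ i : ℕ, 1 ≤ i → i ≤ n - 1 →
      |Real.sqrt (σsq i) / (Real.sqrt Astar * Real.log n ^ ((3 : ℝ) / 2)) - 1|
        ≤ Cc * ((|Real.log ((i : ℝ) / (n : ℝ))| + 1) / Real.log n)) ∧
    ((fun n : ℕ => (1 / harmSum (n - 1)) *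
        ∑ i ∈ Finset.Icc 1 (n - 1),
          |Real.sqrt (σsq i) / (Real.sqrt Astar * Real.log n ^ ((3 : ℝ) / 2)) - 1| ^ 3
            / ((n : ℝ) - (i : ℝ)))
      =O[atTop] (fun n : ℕ => Real.log n ^ (-(3 : ℝ)))) := by
  obtain ⟨C, hC, hpt⟩ := exists_pointwise_bound Astar hA σsq hσnonneg hσ
  refine ⟨⟨C, hpt⟩, IsBigO.of_bound (12 * exp 1 * C ^ 3) ?_⟩
  filter_upwards [eventually_ge_atTop 2] with n hn
  have hL : 0 < log n := log_pos (by exact_mod_cast hn)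
  rw [norm_eq_abs, norm_of_nonneg (rpow_nonneg hL.le _), rpow_neg hL.le, ← div_eq_mul_inv]
  exact_mod_cast abs_harmonic_average_pow_three_le hn hC (hpt n hn)
end
end
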